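/- arXiv:1407.1212 — 2 statements merged into one kernel-verified Lean document; each statement's English description precedes it below -/
import Mathlib

section
/- Let x be a random vector with distribution F on ℝ^d such that P(x = z) = 0 for every z, and suppose E[‖x‖] < ∞ for the sake of differentiability arguments (or interpret expectations of the bounded integrands directly). If Q minimizes Q ↦ E[Φ(u, x − Q) − Φ(u, x)] for some u with ‖u‖ < 1, then E[(x − Q)/‖x − Q‖] + u = 0. -/
/-!
The objective `Q ↦ E[Φ(u, x - Q) - Φ(u, x)]` is Fréchet differentiable at `Q` with derivative
`-⟪E[(x - Q)/‖x - Q‖] + u, ·⟫`: every integrand is `(1 + ‖u‖)`-Lipschitz in `Q` and, off the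
null set `{x = Q}`, differentiable at `Q`, so one may differentiate under the integral sign.
At a minimizer this derivative vanishes.
-/

open RealInnerProductSpace MeasureTheory

variable {E : Type*} [NormedAddCommGroup E] [InnerProductSpace ℝ E]

/-- The paper's `Φ(u, s)`. -/
def spatialLoss (u s : E) : ℝ := ‖s‖ + ⟪u, s⟫

theorem lipschitzWith_spatialLoss (u : E) : LipschitzWith (1 + ‖u‖₊) (spatialLoss u) := by
  have h := lipschitzWith_one_norm.add (innerSL ℝ u).lipschitz
  have hnorm : ‖innerSL ℝ u‖₊ = ‖u‖₊ := NNReal.eq (innerSL_apply_norm ℝ u)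
  rwa [hnorm] at h

@[fun_prop]
theorem continuous_spatialLoss (u : E) : Continuous (spatialLoss u) :=
  (lipschitzWith_spatialLoss u).continuous

theorem hasFDerivAt_norm {x : E} (hx : x ≠ 0) :
    HasFDerivAt (‖·‖) (innerSL ℝ (‖x‖⁻¹ • x)) x := by
  have h := (hasStrictFDerivAt_norm_sq x).hasFDerivAt.sqrt (by simpa using hx)
  simp only [Real.sqrt_sq (norm_nonneg _)] at h
  refine h.congr_fderiv ?_
  rw [map_smul, ← Nat.cast_smul_eq_nsmul ℝ, Nat.cast_ofNat, smul_smul]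
  congr 1
  field_simp

theorem hasFDerivAt_spatialLoss (u : E) {s : E} (hs : s ≠ 0) :
    HasFDerivAt (spatialLoss u) (innerSL ℝ (‖s‖⁻¹ • s + u)) s := by
  rw [map_add]
  exact (hasFDerivAt_norm hs).add (innerSL ℝ u).hasFDerivAt

section Measure

variable [MeasurableSpace E] [BorelSpace E] {μ : Measure E}

theorem integrable_spatialLoss_sub_sub [IsFiniteMeasure μ] (u Q : E) :
    Integrable (fun x => spatialLoss u (x - Q) - spatialLoss u x) μ := by
  refine .of_bound (by fun_prop) ((1 + ‖u‖) * ‖Q‖) (.of_forall fun x => ?_)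
  simpa [← dist_eq_norm] using (lipschitzWith_spatialLoss u).dist_le_mul (x - Q) x

theorem integrable_inv_norm_smul_sub [IsFiniteMeasure μ] [SecondCountableTopology E] (Q : E) :
    Integrable (fun x => ‖x - Q‖⁻¹ • (x - Q)) μ := by
  refine .of_bound (by fun_prop) 1 (.of_forall fun x => ?_)
  rw [norm_smul, norm_inv, norm_norm]
  exact inv_mul_le_one

theorem hasFDerivAt_integral_spatialLoss_sub [CompleteSpace E] [SecondCountableTopology E]
    [IsProbabilityMeasure μ] (u : E) {Q : E} (hQ : ∀ᵐ x ∂μ, x ≠ Q) :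
    HasFDerivAt (fun Q' => ∫ x, spatialLoss u (x - Q') - spatialLoss u x ∂μ)
      (-innerSL ℝ ((∫ x, ‖x - Q‖⁻¹ • (x - Q) ∂μ) + u)) Q := by
  have hdiff : ∀ᵐ x ∂μ, HasFDerivAt (fun Q' => spatialLoss u (x - Q') - spatialLoss u x)
      (-innerSL ℝ (‖x - Q‖⁻¹ • (x - Q) + u)) Q := by
    filter_upwards [hQ] with x hx
    have h := (hasFDerivAt_spatialLoss u (sub_ne_zero.2 hx)).comp Q
      ((hasFDerivAt_id Q).const_sub x)
    simpa using h.sub_const (spatialLoss u x)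
  have hlip : ∀ᵐ x ∂μ, ∀ Q' ∈ Set.univ, ‖(spatialLoss u (x - Q') - spatialLoss u x) -
      (spatialLoss u (x - Q) - spatialLoss u x)‖ ≤ (1 + ‖u‖) * ‖Q' - Q‖ := by
    refine .of_forall fun x Q' _ => ?_
    have h := (lipschitzWith_spatialLoss u).dist_le_mul (x - Q') (x - Q)
    rw [dist_sub_left, dist_eq_norm, dist_eq_norm] at h
    rw [sub_sub_sub_cancel_right]
    exact_mod_cast h
  have hg := integrable_inv_norm_smul_sub (μ := μ) Q
  obtain ⟨-, h⟩ := hasFDerivAt_integral_of_dominated_loc_of_lip'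
    (F := fun Q' x => spatialLoss u (x - Q') - spatialLoss u x)
    (F' := fun x => -innerSL ℝ (‖x - Q‖⁻¹ • (x - Q) + u)) Filter.univ_mem
    (fun Q' _ => (integrable_spatialLoss_sub_sub u Q').aestronglyMeasurable)
    (integrable_spatialLoss_sub_sub u Q)
    ((innerSL ℝ).continuous.comp_aestronglyMeasurable (hg.1.add_const u)).neg
    hlip (integrable_const _) hdiff
  refine h.congr_fderiv ?_
  have hgu : Integrable (fun x => ‖x - Q‖⁻¹ • (x - Q) + u) μ := hg.add (integrable_const u)
  rw [integral_neg, ContinuousLinearMap.integral_comp_comm _ hgu,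
    integral_add hg (integrable_const u), integral_const]
  simp

end Measure

theorem stmt3_general {d : ℕ} (F : Measure (EuclideanSpace ℝ (Fin d)))
    [IsProbabilityMeasure F]
    (hatom : ∀ z : EuclideanSpace ℝ (Fin d), F {z} = 0)
    (u Q : EuclideanSpace ℝ (Fin d))
    (hmin : IsMinOn
      (fun Q' : EuclideanSpace ℝ (Fin d) =>
        ∫ x, ((‖x - Q'‖ + ⟪u, x - Q'⟫) - (‖x‖ + ⟪u, x⟫)) ∂F)
      Set.univ Q) :
    (∫ x, ‖x - Q‖⁻¹ • (x - Q) ∂F) + u = 0 := by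
  have : NullSingletonClass F := ⟨hatom⟩
  have hderiv := (hmin.isLocalMin Filter.univ_mem).hasFDerivAt_eq_zero
    (hasFDerivAt_integral_spatialLoss_sub u (Measure.ae_ne F Q))
  rwa [neg_eq_zero, ← norm_eq_zero, innerSL_apply_norm, norm_eq_zero] at hderiv

/-- First-order optimality condition for the spatial quantile: if Q minimizes
Q ↦ E[Φ(u, x − Q) − Φ(u, x)] with ‖u‖ < 1 and the distribution of x has no
atoms, then E[(x − Q)/‖x − Q‖] + u = 0. -/
theorem stmt3 {d : ℕ} (F : Measure (EuclideanSpace ℝ (Fin d)))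
    [IsProbabilityMeasure F]
    (hatom : ∀ z : EuclideanSpace ℝ (Fin d), F {z} = 0)
    (hmom : Integrable (fun x : EuclideanSpace ℝ (Fin d) => ‖x‖) F)
    (u Q : EuclideanSpace ℝ (Fin d)) (hu : ‖u‖ < 1)
    (hmin : IsMinOn
      (fun Q' : EuclideanSpace ℝ (Fin d) =>
        ∫ x, ((‖x - Q'‖ + ⟪u, x - Q'⟫) - (‖x‖ + ⟪u, x⟫)) ∂F)
      Set.univ Q) :
    (∫ x, ‖x - Q‖⁻¹ • (x - Q) ∂F) + u = 0 :=
  stmt3_general F hatom u Q hmin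
end

section
/- Strict convexity and uniqueness of the spatial quantile: let d ≥ 2 and let x be a random vector in ℝ^d whose distribution is not concentrated on any straight line and satisfies P(x = z) = 0 for all z. Then for each u with ‖u‖ < 1, the function g(Q) = E[Φ(u, x − Q) − Φ(u, x)] is strictly convex on ℝ^d, and hence has at most one minimizer. -/
open RealInnerProductSpace MeasureTheory Set

/-!
Since `⟪u, x - Q⟫ - ⟪u, x⟫ = -⟪u, Q⟫`, the objective is `Q ↦ ∫ (‖x - Q‖ - ‖x‖) dμ` minus a linear
functional. For `Q₁ ≠ Q₂` and `a, b > 0`, `a + b = 1`, the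
triangle inequality `‖x - (a Q₁ + b Q₂)‖ ≤ a ‖x - Q₁‖ + b ‖x - Q₂‖` is strict unless `x - Q₁` and
`x - Q₂` lie on a common ray, which puts `x` on the line through `Q₁` and `Q₂`. That line has
mass `< 1`, so the gap has positive integral. A strictly convex function has at most one
minimizer.
-/

section Line

variable {M : Type*} [AddCommGroup M] [Module ℝ M]

theorem exists_eq_add_smul_sub_of_sameRay {x Q₁ Q₂ : M} (hne : Q₁ ≠ Q₂)
    (h : SameRay ℝ (x - Q₁) (x - Q₂)) : ∃ t : ℝ, x = Q₁ + t • (Q₂ - Q₁) := by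
  rcases eq_or_ne (x - Q₁) 0 with h₁ | h₁
  · exact ⟨0, by rw [sub_eq_zero.1 h₁, zero_smul, add_zero]⟩
  rcases eq_or_ne (x - Q₂) 0 with h₂ | h₂
  · exact ⟨1, by rw [sub_eq_zero.1 h₂, one_smul, add_sub_cancel]⟩
  obtain ⟨r, -, hr⟩ := h.exists_pos_left h₁ h₂
  have hr₁ : 1 - r ≠ 0 := by
    rintro hr₁
    obtain rfl : r = 1 := by linarith
    exact hne (by simpa using hr)
  refine ⟨(1 - r)⁻¹, smul_right_injective M hr₁ ?_⟩
  simp only [smul_add, smul_smul, mul_inv_cancel₀ hr₁, one_smul]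
  linear_combination (norm := module) (-1 : ℝ) • hr

theorem isClosed_setOf_exists_eq_add_smul {E : Type*} [NormedAddCommGroup E] [NormedSpace ℝ E]
    (a v : E) : IsClosed {x | ∃ t : ℝ, x = a + t • v} := by
  have : {x | ∃ t : ℝ, x = a + t • v} = (· - a) ⁻¹' (ℝ ∙ v) := by
    ext x
    simp only [mem_ofPred_eq, mem_preimage, SetLike.mem_coe, Submodule.mem_span_singleton,
      eq_sub_iff_add_eq', eq_comm]
  rw [this]
  exact (Submodule.closed_of_finiteDimensional _).preimage (continuous_sub_right a)

end Line

section StrictConvexIntegral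

variable {E α : Type*} [AddCommGroup E] [Module ℝ E] [MeasurableSpace α] {μ : Measure α}

theorem strictConvexOn_integral {s : Set E} (hs : Convex ℝ s) {f : E → α → ℝ}
    (hint : ∀ Q ∈ s, Integrable (f Q) μ) (hconv : ∀ x, ConvexOn ℝ s (f · x))
    (hstrict : ∀ Q₁ ∈ s, ∀ Q₂ ∈ s, Q₁ ≠ Q₂ → ∀ a b : ℝ, 0 < a → 0 < b → a + b = 1 →
      0 < μ {x | f (a • Q₁ + b • Q₂) x < a * f Q₁ x + b * f Q₂ x}) :
    StrictConvexOn ℝ s (fun Q => ∫ x, f Q x ∂μ) := by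
  refine ⟨hs, fun Q₁ h₁ Q₂ h₂ hne a b ha hb hab => ?_⟩
  have hmid := hs h₁ h₂ ha.le hb.le hab
  have hint₁ := (hint Q₁ h₁).const_mul a
  have hint₂ := (hint Q₂ h₂).const_mul b
  have hint₁₂ : Integrable (fun x => a * f Q₁ x + b * f Q₂ x) μ := hint₁.add hint₂
  have hgap_nonneg : 0 ≤ fun x => a * f Q₁ x + b * f Q₂ x - f (a • Q₁ + b • Q₂) x :=
    fun x => sub_nonneg.2 ((hconv x).2 h₁ h₂ ha.le hb.le hab)
  have hgap_pos := (integral_pos_iff_support_of_nonneg hgap_nonneg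
    (hint₁₂.sub (hint _ hmid))).2 <|
      (hstrict Q₁ h₁ Q₂ h₂ hne a b ha hb hab).trans_le
        (measure_mono fun x hx => (sub_pos.2 hx).ne')
  rw [integral_sub hint₁₂ (hint _ hmid), integral_add hint₁ hint₂,
    integral_const_mul, integral_const_mul, sub_pos] at hgap_pos
  simpa only [smul_eq_mul] using hgap_pos

end StrictConvexIntegral

section NormedSpace

variable {E : Type*} [NormedAddCommGroup E]

theorem integrable_norm_sub_sub_norm [MeasurableSpace E] [OpensMeasurableSpace E]
    (μ : Measure E) [IsFiniteMeasure μ] (Q : E) : Integrable (fun x => ‖x - Q‖ - ‖x‖) μ := by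
  refine Integrable.mono' (integrable_const ‖Q‖)
    (by fun_prop : Continuous fun x : E => ‖x - Q‖ - ‖x‖).aestronglyMeasurable ?_
  filter_upwards with x
  simpa using abs_norm_sub_norm_le (x - Q) x

variable [NormedSpace ℝ E]

theorem norm_sub_smul_add_smul_lt_of_not_sameRay [StrictConvexSpace ℝ E] {x Q₁ Q₂ : E} {a b : ℝ}
    (ha : 0 < a) (hb : 0 < b) (hab : a + b = 1) (h : ¬ SameRay ℝ (x - Q₁) (x - Q₂)) :
    ‖x - (a • Q₁ + b • Q₂)‖ < a * ‖x - Q₁‖ + b * ‖x - Q₂‖ := by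
  have hsplit : x - (a • Q₁ + b • Q₂) = a • (x - Q₁) + b • (x - Q₂) := by
    obtain rfl : b = 1 - a := by linarith
    module
  have hray : ¬ SameRay ℝ (a • (x - Q₁)) (b • (x - Q₂)) := fun hsame => h <| by
    simpa [smul_smul, ha.ne', hb.ne'] using
      (hsame.pos_smul_left (inv_pos.2 ha)).pos_smul_right (inv_pos.2 hb)
  simpa [hsplit, norm_smul, abs_of_pos ha, abs_of_pos hb] using norm_add_lt_of_not_sameRay hray

theorem strictConvexOn_integral_norm_sub_sub_norm [StrictConvexSpace ℝ E] [MeasurableSpace E]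
    [BorelSpace E] (μ : Measure E) [IsProbabilityMeasure μ]
    (hline : ¬ ∃ a v : E, μ {x | ∃ t : ℝ, x = a + t • v} = 1) :
    StrictConvexOn ℝ univ (fun Q => ∫ x, (‖x - Q‖ - ‖x‖) ∂μ) := by
  refine strictConvexOn_integral convex_univ (fun Q _ => integrable_norm_sub_sub_norm μ Q)
    (fun x => ?_) fun Q₁ _ Q₂ _ hne a b ha hb hab => ?_
  · simpa only [dist_eq_norm', Pi.add_def, ← sub_eq_add_neg] using
      (convexOn_univ_dist x).add_const (-‖x‖)
  have hoff : 0 < μ {x | ∃ t : ℝ, x = Q₁ + t • (Q₂ - Q₁)}ᶜ := by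
    refine pos_iff_ne_zero.2 fun h => hline ⟨Q₁, Q₂ - Q₁, ?_⟩
    exact (prob_compl_eq_zero_iff (isClosed_setOf_exists_eq_add_smul _ _).measurableSet).1 h
  refine hoff.trans_le (measure_mono fun x hx => ?_)
  have := norm_sub_smul_add_smul_lt_of_not_sameRay ha hb hab
    fun h => hx (exists_eq_add_smul_sub_of_sameRay hne h)
  simp only [mem_ofPred_eq]
  linear_combination this + ‖x‖ * hab

end NormedSpace

theorem integral_norm_add_inner_sub_eq {E : Type*} [NormedAddCommGroup E]
    [InnerProductSpace ℝ E] [MeasurableSpace E] [OpensMeasurableSpace E]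
    (μ : Measure E) [IsProbabilityMeasure μ] (u Q : E) :
    ∫ x, ((‖x - Q‖ + ⟪u, x - Q⟫) - (‖x‖ + ⟪u, x⟫)) ∂μ = ∫ x, (‖x - Q‖ - ‖x‖) ∂μ - ⟪u, Q⟫ := by
  have hlinear (x : E) : (‖x - Q‖ + ⟪u, x - Q⟫) - (‖x‖ + ⟪u, x⟫) = ‖x - Q‖ - ‖x‖ - ⟪u, Q⟫ := by
    rw [inner_sub_right]; ring
  simp_rw [hlinear]
  rw [integral_sub (integrable_norm_sub_sub_norm μ Q) (integrable_const _), integral_const,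
    probReal_univ, one_smul]

theorem stmt17_general {d : ℕ}
    (μ : Measure (EuclideanSpace ℝ (Fin d))) [IsProbabilityMeasure μ]
    (hline : ¬ ∃ a v : EuclideanSpace ℝ (Fin d),
      μ {x | ∃ t : ℝ, x = a + t • v} = 1)
    (u : EuclideanSpace ℝ (Fin d)) :
    StrictConvexOn ℝ Set.univ
      (fun Q : EuclideanSpace ℝ (Fin d) =>
        ∫ x, ((‖x - Q‖ + ⟪u, x - Q⟫) - (‖x‖ + ⟪u, x⟫)) ∂μ) ∧
    ∀ Q₁ Q₂ : EuclideanSpace ℝ (Fin d),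
      IsMinOn (fun Q : EuclideanSpace ℝ (Fin d) =>
          ∫ x, ((‖x - Q‖ + ⟪u, x - Q⟫) - (‖x‖ + ⟪u, x⟫)) ∂μ) Set.univ Q₁ →
      IsMinOn (fun Q : EuclideanSpace ℝ (Fin d) =>
          ∫ x, ((‖x - Q‖ + ⟪u, x - Q⟫) - (‖x‖ + ⟪u, x⟫)) ∂μ) Set.univ Q₂ →
      Q₁ = Q₂ := by
  have hstrict : StrictConvexOn ℝ univ
      (fun Q : EuclideanSpace ℝ (Fin d) => ∫ x, (‖x - Q‖ - ‖x‖) ∂μ - ⟪u, Q⟫) :=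
    (strictConvexOn_integral_norm_sub_sub_norm μ hline).sub_concaveOn
      ((innerₛₗ ℝ u).concaveOn convex_univ)
  simp_rw [integral_norm_add_inner_sub_eq μ u]
  exact ⟨hstrict, fun Q₁ Q₂ h₁ h₂ => hstrict.eq_of_isMinOn h₁ h₂ trivial trivial⟩

/-- Strict convexity and uniqueness of the spatial quantile: for d ≥ 2, a
non-atomic distribution not concentrated on any straight line, and ‖u‖ < 1,
the objective g(Q) = E[Φ(u, x − Q) − Φ(u, x)] is strictly convex, hence has
at most one minimizer. -/
theorem stmt17 {d : ℕ} (hd : 2 ≤ d)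
    (μ : Measure (EuclideanSpace ℝ (Fin d))) [IsProbabilityMeasure μ]
    (hatom : ∀ z : EuclideanSpace ℝ (Fin d), μ {z} = 0)
    (hline : ¬ ∃ a v : EuclideanSpace ℝ (Fin d),
      μ {x | ∃ t : ℝ, x = a + t • v} = 1)
    (u : EuclideanSpace ℝ (Fin d)) (hu : ‖u‖ < 1) :
    StrictConvexOn ℝ Set.univ
      (fun Q : EuclideanSpace ℝ (Fin d) =>
        ∫ x, ((‖x - Q‖ + ⟪u, x - Q⟫) - (‖x‖ + ⟪u, x⟫)) ∂μ) ∧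
    ∀ Q₁ Q₂ : EuclideanSpace ℝ (Fin d),
      IsMinOn (fun Q : EuclideanSpace ℝ (Fin d) =>
          ∫ x, ((‖x - Q‖ + ⟪u, x - Q⟫) - (‖x‖ + ⟪u, x⟫)) ∂μ) Set.univ Q₁ →
      IsMinOn (fun Q : EuclideanSpace ℝ (Fin d) =>
          ∫ x, ((‖x - Q‖ + ⟪u, x - Q⟫) - (‖x‖ + ⟪u, x⟫)) ∂μ) Set.univ Q₂ →
      Q₁ = Q₂ :=
  stmt17_general μ hline u
end
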